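/- arXiv:1003.3231 — 2 statements merged into one kernel-verified Lean document; each statement's English description precedes it below -/
import Mathlib

section
/- For every subset J ⊆ I there is a unique functor from the Weyl groupoid of the restricted Cartan scheme C|_J to W(C) which is the identity on objects and sends σ_j^a to σ_j^a for j ∈ J; this functor is an isomorphism of groupoids onto the parabolic subgroupoid W_J(C). -/
set_option linter.unusedSectionVars false

/-- A Cartan scheme `C = C(I, A, (ρ_i), (C^a))`. -/
structure CartanScheme (I A : Type) [Fintype I] [DecidableEq I] [Fintype A] [Nonempty A] where
  ρ : I → A → A
  c : A → I → I → ℤ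
  ρ_invol : ∀ i a, ρ i (ρ i a) = a
  c_diag : ∀ a i, c a i i = 2
  c_offdiag_nonpos : ∀ a i j, i ≠ j → c a i j ≤ 0
  c_zero_symm : ∀ a i j, c a i j = 0 → c a j i = 0
  c_rho : ∀ a i j, c (ρ i a) i j = c a i j

namespace CartanScheme

variable {I A : Type} [Fintype I] [DecidableEq I] [Fintype A] [Nonempty A] [DecidableEq A]
variable (C : CartanScheme I A)

/-- The simple reflection `σ_i^a` as a map `ℤ^I → ℤ^I`, `σ_i^a(α_j) = α_j - c^a_{ij} α_i`. -/
def sigma (a : A) (i : I) : (I → ℤ) → (I → ℤ) :=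
  fun v k => v k - (if k = i then ∑ j, C.c a i j * v j else 0)

/-- Target object of the word `[i_1, …, i_k]` read at source object `a`:
`ρ_{i_1} ⋯ ρ_{i_k}(a)`. -/
def wordTarget (a : A) : List I → A
  | [] => a
  | i :: l => C.ρ i (wordTarget a l)

/-- The map `σ_{i_1} ⋯ σ_{i_k}^a : ℤ^I → ℤ^I` determined by a word with source `a`. -/
def wordMap (a : A) : List I → ((I → ℤ) → (I → ℤ))
  | [] => id
  | i :: l => C.sigma (C.wordTarget a l) i ∘ wordMap a l

theorem wordTarget_append (a : A) (l₁ l₂ : List I) :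
    C.wordTarget a (l₁ ++ l₂) = C.wordTarget (C.wordTarget a l₂) l₁ := by
  induction l₁ with
  | nil => rfl
  | cons i l ih => simp [wordTarget, ih]

theorem wordMap_append (a : A) (l₁ l₂ : List I) :
    C.wordMap a (l₁ ++ l₂) = C.wordMap (C.wordTarget a l₂) l₁ ∘ C.wordMap a l₂ := by
  induction l₁ with
  | nil => rfl
  | cons i l ih => simp [wordMap, ih, wordTarget_append, Function.comp_assoc]

/-- A morphism of the Weyl groupoid `W(C)`: a source object, a target object, and a map
`ℤ^I → ℤ^I` which is a composition of simple reflections along some word. -/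
@[ext]
structure Mor where
  src : A
  tgt : A
  toFun : (I → ℤ) → (I → ℤ)
  spec : ∃ l : List I, C.wordTarget src l = tgt ∧ C.wordMap src l = toFun

variable {C}

/-- A word realizes a morphism. -/
def Realizes (w : Mor C) (l : List I) : Prop :=
  C.wordTarget w.src l = w.tgt ∧ C.wordMap w.src l = w.toFun

variable (C)

/-- The identity morphism `id^a`. -/
def idMor (a : A) : Mor C := ⟨a, a, id, ⟨[], rfl, rfl⟩⟩

/-- The generator `σ_i^a ∈ Hom(a, ρ_i(a))`. -/
def genMor (i : I) (a : A) : Mor C :=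
  ⟨a, C.ρ i a, C.sigma a i, ⟨[i], rfl, Function.comp_id _⟩⟩

/-- The simple reflection with target `a`, i.e. `id^a σ_i = σ_i^{ρ_i(a)} ∈ Hom(ρ_i(a), a)`. -/
def sgen (a : A) (i : I) : Mor C :=
  { src := C.ρ i a, tgt := a, toFun := C.sigma (C.ρ i a) i,
    spec := ⟨[i], by simp [wordTarget, C.ρ_invol], Function.comp_id _⟩ }

variable {C}

/-- Composition `u ∘ v` (with `v` applied first); junk value `u` if not composable. -/
def Mor.comp (u v : Mor C) : Mor C :=
  if h : v.tgt = u.src then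
    { src := v.src, tgt := u.tgt, toFun := u.toFun ∘ v.toFun,
      spec := by
        obtain ⟨lu, hu1, hu2⟩ := u.spec
        obtain ⟨lv, hv1, hv2⟩ := v.spec
        refine ⟨lu ++ lv, ?_, ?_⟩
        · rw [C.wordTarget_append, hv1, h, hu1]
        · rw [C.wordMap_append, hv1, h, hu2, hv2] }
  else u

/-- Length of a morphism: minimal length of a realizing word. -/
noncomputable def len (w : Mor C) : ℕ := sInf {k | ∃ l : List I, Realizes w l ∧ l.length = k}

/-- A reduced decomposition. -/
def IsReduced (w : Mor C) (l : List I) : Prop := Realizes w l ∧ l.length = len w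

/-- The (right) weak order: `u ≤_R uv` iff `ℓ(uv) = ℓ(u) + ℓ(v)`. -/
def weakLe (u w : Mor C) : Prop :=
  ∃ v : Mor C, v.tgt = u.src ∧ w = u.comp v ∧ len w = len u + len v

/-- Membership in the parabolic subgroupoid `W_J(C)`. -/
def InParabolic (J : Set I) (w : Mor C) : Prop :=
  ∃ l : List I, (∀ i ∈ l, i ∈ J) ∧ Realizes w l

/-- Length with respect to the generators `σ_j`, `j ∈ J`. -/
noncomputable def lenPar (J : Set I) (w : Mor C) : ℕ :=
  sInf {k | ∃ l : List I, (∀ i ∈ l, i ∈ J) ∧ Realizes w l ∧ l.length = k}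

/-- The set of letters occurring in some reduced decomposition of `w`;
by the theorem on reduced decompositions this is the set `J(w)`. -/
def Jset (w : Mor C) : Set I := {i | ∃ l : List I, IsReduced w l ∧ i ∈ l}

variable (C)

/-- The set of real roots at the object `a`. -/
def roots (a : A) : Set (I → ℤ) :=
  {α | ∃ (b : A) (l : List I) (j : I),
    C.wordTarget b l = a ∧ α = C.wordMap b l (Pi.single j 1)}

/-- The set of positive (real) roots at `a`. -/
def posRoots (a : A) : Set (I → ℤ) := {α ∈ C.roots a | ∀ i, 0 ≤ α i}

/-- `R^re(C)` is a finite root system of type `C`: axioms (R1), (R2), (R4) and finiteness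
((R3) holds automatically for real roots). -/
def IsFRS : Prop :=
  (∀ a : A, (C.roots a).Finite) ∧
  (∀ (a : A) (α : I → ℤ), α ∈ C.roots a → (∀ i, 0 ≤ α i) ∨ (∀ i, α i ≤ 0)) ∧
  (∀ (a : A) (i : I) (α : I → ℤ), α ∈ C.roots a → (∃ z : ℤ, α = z • Pi.single i 1) →
    α = Pi.single i 1 ∨ α = -Pi.single i 1) ∧
  (∀ (a : A) (i j : I), i ≠ j →
    (fun x => C.ρ i (C.ρ j x))^[(C.roots a ∩
      {α | ∃ m n : ℕ, α = (m : ℤ) • Pi.single i 1 + (n : ℤ) • Pi.single j 1}).ncard] a = a)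

variable {C}

/-- `I_L(w)`: the set of simple reflections with target `w.tgt` below `w` in weak order. -/
def IL (w : Mor C) : Set I := {i | weakLe (sgen C w.tgt i) w}

/-- `m` is the longest element of `Hom(-,a) ∩ W_J(C)`, i.e. `w_J` at the object `a`. -/
def IsLongestPar (a : A) (J : Set I) (m : Mor C) : Prop :=
  m.tgt = a ∧ InParabolic J m ∧
    ∀ x : Mor C, x.tgt = a → InParabolic J x → weakLe x m

/-- `m` is the longest element `w_I` of `Hom(-,a)`. -/
def IsLongestAt (a : A) (m : Mor C) : Prop :=
  m.tgt = a ∧ ∀ x : Mor C, x.tgt = a → weakLe x m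

/-- `z` is the meet of `x` and `y` in `(Hom(-,a), ≤_R)`. -/
def IsMeet (a : A) (x y z : Mor C) : Prop :=
  z.tgt = a ∧ weakLe z x ∧ weakLe z y ∧
    ∀ t : Mor C, t.tgt = a → weakLe t x → weakLe t y → weakLe t z

/-- `z` is the join of `x` and `y` in `(Hom(-,a), ≤_R)`. -/
def IsJoin (a : A) (x y z : Mor C) : Prop :=
  z.tgt = a ∧ weakLe x z ∧ weakLe y z ∧
    ∀ t : Mor C, t.tgt = a → weakLe x t → weakLe y t → weakLe z t

/-- The left coset `u W_J(C) ⊆ Hom(-, u.tgt)`. -/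
def leftCoset (u : Mor C) (J : Set I) : Set (Mor C) :=
  {x | ∃ v : Mor C, InParabolic J v ∧ v.tgt = u.src ∧ x = u.comp v}

end CartanScheme

variable {I A : Type} [Fintype I] [DecidableEq I] [Fintype A] [Nonempty A] [DecidableEq A]

open CartanScheme


/-- The restriction `C|_J` of a Cartan scheme to a subset `J ⊆ I`. -/
def CartanScheme.restrict (C : CartanScheme I A) (J : Finset I) : CartanScheme (↥J) A where
  ρ := fun j a => C.ρ j a
  c := fun a j k => C.c a j k
  ρ_invol := fun j a => C.ρ_invol j a
  c_diag := fun a j => C.c_diag a j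
  c_offdiag_nonpos := fun a j k h => C.c_offdiag_nonpos a j k (fun e => h (Subtype.ext e))
  c_zero_symm := fun a j k h => C.c_zero_symm a j k h
  c_rho := fun a j k => C.c_rho a j k

/-- `Φ` is a functor `W(C|_J) → W(C)` which is the identity on objects and sends
`σ_j^a` to `σ_j^a`. -/
def IsRestrictionFunctor (C : CartanScheme I A) (J : Finset I)
    (Φ : Mor (C.restrict J) → Mor C) : Prop :=
  (∀ w : Mor (C.restrict J), (Φ w).src = w.src ∧ (Φ w).tgt = w.tgt) ∧
  (∀ a : A, Φ (idMor (C.restrict J) a) = idMor C a) ∧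
  (∀ u v : Mor (C.restrict J), v.tgt = u.src → Φ (u.comp v) = (Φ u).comp (Φ v)) ∧
  (∀ (j : ↥J) (a : A), Φ (genMor (C.restrict J) j a) = genMor C (j : I) a)

/-!
A restriction functor must send the morphism of `W(C|_J)` given by a word in `J` to the morphism
of `W(C)` given by the same word. This forces uniqueness and describes the image. It also gives
injectivity, since extension by zero `ℤ^J → ℤ^I` intertwines the two actions. For existence, the
assignment must be well defined: two words in `J` that act in the same way on `ℤ^J` must act in
the same way on `ℤ^I`. Equivalently, a word `w` in `J` that fixes `ℤ^J` fixes every `α_i` with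
`i ∉ J`. This follows because `w α_i` and `w⁻¹ α_i` are positive roots that agree with `α_i`
outside `J`.
-/

namespace CartanScheme

variable (C : CartanScheme I A)

theorem sigma_sigma (a : A) (i : I) (v : I → ℤ) :
    C.sigma (C.ρ i a) i (C.sigma a i v) = v := by
  funext k
  simp only [sigma, C.c_rho, mul_sub, mul_ite, mul_zero, Finset.sum_sub_distrib,
    Finset.sum_ite_eq', Finset.mem_univ, if_true, C.c_diag]
  split_ifs <;> ring

theorem sigma_add (a : A) (i : I) (u v : I → ℤ) :
    C.sigma a i (u + v) = C.sigma a i u + C.sigma a i v := by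
  funext k
  simp only [sigma, Pi.add_apply, mul_add, Finset.sum_add_distrib]
  split_ifs <;> ring

theorem wordMap_cons (a : A) (i : I) (l : List I) (v : I → ℤ) :
    C.wordMap a (i :: l) v = C.sigma (C.wordTarget a l) i (C.wordMap a l v) := rfl

theorem wordMap_add (a : A) (l : List I) (u v : I → ℤ) :
    C.wordMap a l (u + v) = C.wordMap a l u + C.wordMap a l v := by
  induction l with
  | nil => rfl
  | cons i t ih => simp only [wordMap_cons, ih, sigma_add]

theorem wordTarget_reverse (a : A) (l : List I) :
    C.wordTarget (C.wordTarget a l) l.reverse = a := by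
  induction l with
  | nil => rfl
  | cons i t ih =>
    have hρ : C.wordTarget (C.wordTarget a (i :: t)) [i] = C.wordTarget a t := C.ρ_invol i _
    rw [List.reverse_cons, wordTarget_append, hρ, ih]

theorem wordMap_reverse (a : A) (l : List I) (v : I → ℤ) :
    C.wordMap (C.wordTarget a l) l.reverse (C.wordMap a l v) = v := by
  induction l generalizing v with
  | nil => rfl
  | cons i t ih =>
    have hρ : C.wordTarget (C.wordTarget a (i :: t)) [i] = C.wordTarget a t := C.ρ_invol i _
    rw [List.reverse_cons, wordMap_append, Function.comp_apply, hρ]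
    exact (congrArg _ (C.sigma_sigma _ i _)).trans (ih v)

theorem wordMap_reverse_right (a : A) (l : List I) (v : I → ℤ) :
    C.wordMap a l (C.wordMap (C.wordTarget a l) l.reverse v) = v := by
  simpa only [wordTarget_reverse, List.reverse_reverse] using
    C.wordMap_reverse (C.wordTarget a l) l.reverse v

theorem wordMap_reverse_append_eq_id {a : A} {l l' : List I}
    (hT : C.wordTarget a l = C.wordTarget a l') (hM : C.wordMap a l = C.wordMap a l') :
    C.wordMap a (l'.reverse ++ l) = id := by
  funext v
  rw [wordMap_append, Function.comp_apply, hT, hM, wordMap_reverse, id]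

theorem wordMap_eq_of_reverse_append_eq_id {a : A} {l l' : List I}
    (hT : C.wordTarget a l = C.wordTarget a l') (h : C.wordMap a (l'.reverse ++ l) = id) :
    C.wordMap a l = C.wordMap a l' := by
  funext v
  have hv := congrFun h v
  rw [wordMap_append, Function.comp_apply, hT, id] at hv
  rw [← C.wordMap_reverse_right a l' (C.wordMap a l v), hv]

/-- Axiom (R1) for the real roots. -/
def HasSignedRoots : Prop :=
  ∀ (a : A) (α : I → ℤ), α ∈ C.roots a → (∀ i, 0 ≤ α i) ∨ (∀ i, α i ≤ 0)

theorem realizes_idMor (a : A) : Realizes (C.idMor a) [] := ⟨rfl, rfl⟩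

theorem realizes_genMor (i : I) (a : A) : Realizes (C.genMor i a) [i] :=
  ⟨rfl, Function.comp_id _⟩

def wordMor (a : A) (l : List I) : Mor C := ⟨a, C.wordTarget a l, C.wordMap a l, l, rfl, rfl⟩

theorem realizes_wordMor (a : A) (l : List I) : Realizes (C.wordMor a l) l := ⟨rfl, rfl⟩

variable {C}

theorem IsFRS.hasSignedRoots (hC : C.IsFRS) : C.HasSignedRoots := hC.2.1

theorem wordMap_apply_of_not_mem {J : Set I} {l : List I} (hl : ∀ j ∈ l, j ∈ J)
    (a : A) (v : I → ℤ) {i : I} (hi : i ∉ J) : C.wordMap a l v i = v i := by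
  induction l with
  | nil => rfl
  | cons j t ih =>
    have hij : i ≠ j := fun h => hi (h ▸ hl j List.mem_cons_self)
    simp only [wordMap_cons, sigma, hij, if_false, sub_zero]
    exact ih fun x hx => hl x (List.mem_cons_of_mem j hx)

theorem wordMap_single_mem_roots (a : A) (l : List I) (i : I) :
    C.wordMap a l (Pi.single i 1) ∈ C.roots (C.wordTarget a l) :=
  ⟨a, l, i, rfl, rfl⟩

/-- The coefficient of `α_i` stays `1`, so the image is a positive root. -/
theorem single_le_wordMap_single (hC : C.HasSignedRoots) {J : Set I} {l : List I}
    (hl : ∀ j ∈ l, j ∈ J) (a : A) {i : I} (hi : i ∉ J) :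
    Pi.single i 1 ≤ C.wordMap a l (Pi.single i 1) := by
  have hαi : C.wordMap a l (Pi.single i 1) i = 1 := by
    rw [wordMap_apply_of_not_mem hl a _ hi, Pi.single_eq_same]
  have hpos : ∀ k, 0 ≤ C.wordMap a l (Pi.single i 1) k := by
    refine (hC _ _ (wordMap_single_mem_roots a l i)).resolve_right fun hneg => ?_
    have := hneg i
    omega
  intro k
  by_cases hk : k = i
  · subst hk; rw [hαi, Pi.single_eq_same]
  · rw [Pi.single_eq_of_ne hk]; exact hpos k

/-- For `i ∉ J` write `w α_i = α_i + γ` and `w⁻¹ α_i = α_i + γ'` with `γ, γ' ≥ 0` supported on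
`J`; since `w⁻¹` fixes `γ`, applying `w⁻¹` to the first equation gives `γ + γ' = 0`. -/
theorem wordMap_eq_id_of_fix (hC : C.HasSignedRoots) {J : Set I} {l : List I}
    (hl : ∀ j ∈ l, j ∈ J) {a : A} (hfix : ∀ v : I → ℤ, (∀ i ∉ J, v i = 0) → C.wordMap a l v = v) :
    C.wordMap a l = id := by
  have hl' : ∀ j ∈ l.reverse, j ∈ J := fun j hj => hl j (List.mem_reverse.mp hj)
  have hsingle : ∀ i, C.wordMap a l (Pi.single i 1) = Pi.single i 1 := by
    intro i
    by_cases hi : i ∈ J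
    · exact hfix _ fun k hk => Pi.single_eq_of_ne (fun (e : k = i) => hk (e ▸ hi)) 1
    set γ := C.wordMap a l (Pi.single i 1) - Pi.single i 1
    set γ' := C.wordMap (C.wordTarget a l) l.reverse (Pi.single i 1) - Pi.single i 1
    have hγ : 0 ≤ γ := sub_nonneg.mpr (single_le_wordMap_single hC hl a hi)
    have hγ' : 0 ≤ γ' := sub_nonneg.mpr (single_le_wordMap_single hC hl' _ hi)
    have hγfix : C.wordMap a l γ = γ := hfix γ fun k hk => by
      simp only [γ, Pi.sub_apply, wordMap_apply_of_not_mem hl a _ hk, sub_self]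
    have hγ'γ : γ' + γ = 0 := by
      have h := C.wordMap_reverse a l (Pi.single i 1)
      have hsplit : C.wordMap a l (Pi.single i 1) = Pi.single i 1 + γ :=
        (add_sub_cancel _ _).symm
      rw [hsplit, wordMap_add, ← hγfix, wordMap_reverse] at h
      calc γ' + γ = C.wordMap (C.wordTarget a l) l.reverse (Pi.single i 1) + γ - Pi.single i 1 :=
            sub_add_eq_add_sub _ _ _
        _ = 0 := by rw [h, sub_self]
    exact sub_eq_zero.mp ((add_eq_zero_iff_of_nonneg hγ' hγ).mp hγ'γ).2
  have hhom : AddMonoidHom.mk' (C.wordMap a l) (C.wordMap_add a l) = AddMonoidHom.id _ :=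
    AddMonoidHom.functions_ext _ _ _ fun i x => by
      rw [← mul_one x, ← smul_eq_mul, Pi.single_smul', map_zsmul]
      exact congrArg _ (hsingle i)
  exact congrArg DFunLike.coe hhom

theorem Mor.exists_realizes (w : Mor C) : ∃ l, Realizes w l := w.spec

theorem Mor.ext_of_realizes {u v : Mor C} {l : List I} (hsrc : u.src = v.src)
    (hu : Realizes u l) (hv : Realizes v l) : u = v :=
  Mor.ext hsrc (by rw [← hu.1, ← hv.1, hsrc]) (by rw [← hu.2, ← hv.2, hsrc])

theorem Mor.comp_src {u v : Mor C} (h : v.tgt = u.src) : (u.comp v).src = v.src := by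
  simp only [Mor.comp, dif_pos h]

theorem Realizes.comp {u v : Mor C} {lu lv : List I} (h : v.tgt = u.src)
    (hu : Realizes u lu) (hv : Realizes v lv) : Realizes (u.comp v) (lu ++ lv) := by
  unfold Realizes Mor.comp
  rw [dif_pos h]
  exact ⟨by rw [wordTarget_append, hv.1, h, hu.1], by rw [wordMap_append, hv.1, h, hu.2, hv.2]⟩

section Restrict

variable {J : Finset I}

@[simp]
theorem restrict_ρ (j : J) (a : A) : (C.restrict J).ρ j a = C.ρ j a := rfl

@[simp]
theorem restrict_c (a : A) (j k : J) : (C.restrict J).c a j k = C.c a j k := rfl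

theorem wordTarget_restrict (a : A) (l : List J) :
    (C.restrict J).wordTarget a l = C.wordTarget a (l.map Subtype.val) := by
  induction l with
  | nil => rfl
  | cons j t ih => simp only [wordTarget, ih, restrict_ρ, List.map_cons]

theorem sum_mul_extend_val (f : I → ℤ) (v : J → ℤ) :
    ∑ k, f k * Function.extend Subtype.val v 0 k = ∑ k : J, f k * v k := by
  rw [← Finset.sum_subset (Finset.subset_univ J) fun k _ hk => by
    rw [Function.extend_apply' _ _ _ fun ⟨k', hk'⟩ => hk (hk' ▸ k'.2), Pi.zero_apply, mul_zero],
    ← Finset.sum_coe_sort J]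
  simp only [Subtype.val_injective.extend_apply]

theorem sigma_extend_val (a : A) (j : J) (v : J → ℤ) :
    C.sigma a j (Function.extend Subtype.val v 0) =
      Function.extend Subtype.val ((C.restrict J).sigma a j v) 0 := by
  funext i
  by_cases hi : ∃ k : J, k.val = i
  · obtain ⟨k, rfl⟩ := hi
    simp only [sigma, Subtype.val_injective.extend_apply, Subtype.val_injective.eq_iff,
      sum_mul_extend_val, restrict_c]
  · have hij : i ≠ j := fun e => hi ⟨j, e.symm⟩
    simp only [sigma, Function.extend_apply' _ _ _ hi, hij, if_false, Pi.zero_apply, sub_zero]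

theorem wordMap_extend_val (a : A) (l : List J) (v : J → ℤ) :
    C.wordMap a (l.map Subtype.val) (Function.extend Subtype.val v 0) =
      Function.extend Subtype.val ((C.restrict J).wordMap a l v) 0 := by
  induction l with
  | nil => rfl
  | cons j t ih =>
    rw [List.map_cons, wordMap_cons, ih, ← wordTarget_restrict, sigma_extend_val]
    rfl

theorem extend_val_restrict {v : I → ℤ} (hv : ∀ i ∉ J, v i = 0) :
    Function.extend Subtype.val (fun j : J => v j) 0 = v := by
  funext i
  by_cases hi : ∃ k : J, k.val = i
  · obtain ⟨k, rfl⟩ := hi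
    exact Subtype.val_injective.extend_apply _ _ k
  · rw [Function.extend_apply' _ _ _ hi, Pi.zero_apply, hv i fun h => hi ⟨⟨i, h⟩, rfl⟩]

/-- The loop `l'⁻¹ l` fixes `ℤ^J`, hence all of `ℤ^I` by `wordMap_eq_id_of_fix`. -/
theorem wordMap_map_val_eq (hC : C.HasSignedRoots) {a : A} {l l' : List J}
    (hT : (C.restrict J).wordTarget a l = (C.restrict J).wordTarget a l')
    (hM : (C.restrict J).wordMap a l = (C.restrict J).wordMap a l') :
    C.wordMap a (l.map Subtype.val) = C.wordMap a (l'.map Subtype.val) := by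
  have hmem : ∀ i ∈ (l'.reverse ++ l).map Subtype.val, i ∈ (J : Set I) := fun i hi => by
    obtain ⟨k, -, rfl⟩ := List.mem_map.mp hi
    exact k.2
  have hloop : C.wordMap a ((l'.reverse ++ l).map Subtype.val) = id :=
    wordMap_eq_id_of_fix hC hmem fun v hv => by
      rw [← extend_val_restrict hv, wordMap_extend_val,
        (C.restrict J).wordMap_reverse_append_eq_id hT hM, id]
  rw [List.map_append, List.map_reverse] at hloop
  rw [wordTarget_restrict, wordTarget_restrict] at hT
  exact C.wordMap_eq_of_reverse_append_eq_id hT hloop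

end Restrict

end CartanScheme

structure LiftsWords (C : CartanScheme I A) (J : Finset I) (Φ : Mor (C.restrict J) → Mor C) :
    Prop where
  src_eq : ∀ w, (Φ w).src = w.src
  realizes : ∀ {w l}, Realizes w l → Realizes (Φ w) (l.map Subtype.val)

namespace LiftsWords

variable {C : CartanScheme I A} {J : Finset I} {Φ : Mor (C.restrict J) → Mor C}

theorem tgt_eq (hΦ : LiftsWords C J Φ) (w : Mor (C.restrict J)) : (Φ w).tgt = w.tgt := by
  obtain ⟨l, hl⟩ := w.exists_realizes
  rw [← (hΦ.realizes hl).1, hΦ.src_eq, ← wordTarget_restrict, hl.1]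

theorem toFun_extend_val (hΦ : LiftsWords C J Φ) (w : Mor (C.restrict J)) (v : J → ℤ) :
    (Φ w).toFun (Function.extend Subtype.val v 0) = Function.extend Subtype.val (w.toFun v) 0 := by
  obtain ⟨l, hl⟩ := w.exists_realizes
  rw [← (hΦ.realizes hl).2, hΦ.src_eq, wordMap_extend_val, hl.2]

theorem unique {Ψ : Mor (C.restrict J) → Mor C} (hΦ : LiftsWords C J Φ)
    (hΨ : LiftsWords C J Ψ) : Φ = Ψ := by
  funext w
  obtain ⟨l, hl⟩ := w.exists_realizes
  exact Mor.ext_of_realizes (by rw [hΦ.src_eq, hΨ.src_eq]) (hΦ.realizes hl) (hΨ.realizes hl)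

theorem injective (hΦ : LiftsWords C J Φ) : Function.Injective Φ := by
  intro u v h
  refine Mor.ext (by rw [← hΦ.src_eq, h, hΦ.src_eq]) (by rw [← hΦ.tgt_eq, h, hΦ.tgt_eq]) ?_
  funext x
  apply Function.extend_injective Subtype.val_injective (0 : I → ℤ)
  simp only [← hΦ.toFun_extend_val, h]

theorem range_eq (hΦ : LiftsWords C J Φ) :
    Set.range Φ = {w : Mor C | InParabolic (↑J : Set I) w} := by
  ext w
  constructor
  · rintro ⟨u, rfl⟩
    obtain ⟨l, hl⟩ := u.exists_realizes
    refine ⟨l.map Subtype.val, fun i hi => ?_, hΦ.realizes hl⟩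
    obtain ⟨k, -, rfl⟩ := List.mem_map.mp hi
    exact k.2
  · rintro ⟨l, hlJ, hl⟩
    let l' : List J := l.pmap Subtype.mk hlJ
    have hl' : l'.map Subtype.val = l := by simp [l', List.map_pmap]
    refine ⟨(C.restrict J).wordMor w.src l', Mor.ext_of_realizes (hΦ.src_eq _) ?_ hl⟩
    simpa only [hl'] using hΦ.realizes ((C.restrict J).realizes_wordMor w.src l')

theorem isRestrictionFunctor (hΦ : LiftsWords C J Φ) : IsRestrictionFunctor C J Φ := by
  refine ⟨fun w => ⟨hΦ.src_eq w, hΦ.tgt_eq w⟩, fun a => ?_, fun u v h => ?_, fun j a => ?_⟩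
  · exact Mor.ext_of_realizes (hΦ.src_eq _) (hΦ.realizes (realizes_idMor _ a)) (realizes_idMor C a)
  · obtain ⟨lu, hu⟩ := u.exists_realizes
    obtain ⟨lv, hv⟩ := v.exists_realizes
    have h' : (Φ v).tgt = (Φ u).src := by rw [hΦ.tgt_eq, hΦ.src_eq, h]
    refine Mor.ext_of_realizes ?_ (hΦ.realizes (hu.comp h hv))
      (by simpa only [List.map_append] using (hΦ.realizes hu).comp h' (hΦ.realizes hv))
    rw [hΦ.src_eq, Mor.comp_src h, Mor.comp_src h', hΦ.src_eq]
  · exact Mor.ext_of_realizes (hΦ.src_eq _) (hΦ.realizes (realizes_genMor _ j a))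
      (realizes_genMor C j a)

end LiftsWords

theorem IsRestrictionFunctor.liftsWords {C : CartanScheme I A} {J : Finset I}
    {Φ : Mor (C.restrict J) → Mor C} (hΦ : IsRestrictionFunctor C J Φ) : LiftsWords C J Φ := by
  refine ⟨fun w => (hΦ.1 w).1, fun {w l} hl => ?_⟩
  induction l generalizing w with
  | nil =>
    have hw : w = idMor _ w.src := Mor.ext_of_realizes rfl hl (realizes_idMor _ _)
    rw [hw, hΦ.2.1]
    exact realizes_idMor C _
  | cons j t ih =>
    have hsrc : ((C.restrict J).wordMor w.src t).tgt = (genMor (C.restrict J) j _).src := rfl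
    have hw : w = (genMor _ j ((C.restrict J).wordTarget w.src t)).comp
        ((C.restrict J).wordMor w.src t) :=
      Mor.ext_of_realizes (Mor.comp_src hsrc).symm hl
        ((realizes_genMor _ j _).comp hsrc (realizes_wordMor _ _ t))
    have hΦsrc : (Φ ((C.restrict J).wordMor w.src t)).tgt = (genMor C (j : I) _).src :=
      (hΦ.1 _).2
    rw [hw, hΦ.2.2.1 _ _ hsrc, hΦ.2.2.2]
    exact (realizes_genMor C j _).comp hΦsrc (ih (realizes_wordMor _ _ t))

theorem exists_liftsWords {C : CartanScheme I A} (hC : C.HasSignedRoots) (J : Finset I) :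
    ∃ Φ, LiftsWords C J Φ := by
  refine ⟨fun w => C.wordMor w.src (w.spec.choose.map Subtype.val), fun w => rfl,
    fun {w l} hl => ?_⟩
  obtain ⟨hT, hM⟩ := w.spec.choose_spec
  refine ⟨?_, wordMap_map_val_eq hC (hl.1.trans hT.symm) (hl.2.trans hM.symm)⟩
  show C.wordTarget w.src (l.map Subtype.val) = C.wordTarget w.src (w.spec.choose.map Subtype.val)
  rw [← wordTarget_restrict, ← wordTarget_restrict, hl.1, hT]

/-- There is a unique functor `W(C|_J) → W(C)` which is the identity on objects
and sends `σ_j^a` to `σ_j^a`, and it is an isomorphism of groupoids onto `W_J(C)`. -/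
theorem restriction_functor_unique_iso (C : CartanScheme I A) (hC : C.IsFRS) (J : Finset I) :
    (∃! Φ : Mor (C.restrict J) → Mor C, IsRestrictionFunctor C J Φ) ∧
    (∀ Φ : Mor (C.restrict J) → Mor C, IsRestrictionFunctor C J Φ →
      Function.Injective Φ ∧
      Set.range Φ = {w : Mor C | InParabolic (↑J : Set I) w}) := by
  obtain ⟨Φ₀, hΦ₀⟩ := exists_liftsWords hC.hasSignedRoots J
  exact ⟨⟨Φ₀, hΦ₀.isRestrictionFunctor, fun Φ hΦ => hΦ.liftsWords.unique hΦ₀⟩,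
    fun Φ hΦ => ⟨hΦ.liftsWords.injective, hΦ.liftsWords.range_eq⟩⟩
end

section
/- Let a, b be objects, u ∈ Hom(b, a), and v ∈ Hom(−, a) with u ≤_R v in the weak order. Then the map w ↦ u⁻¹w is an isomorphism of posets from the closed interval [u, v] in (Hom(−,a), ≤_R) onto the closed interval [id^b, u⁻¹v] in (Hom(−,b), ≤_R). -/
set_option linter.unusedSectionVars false

variable {I A : Type} [Fintype I] [DecidableEq I] [Fintype A] [Nonempty A] [DecidableEq A]

open CartanScheme

section Aux

variable {C : CartanScheme I A}

lemma sigma_sigma (a : A) (i : I) (v : I → ℤ) :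
    C.sigma (C.ρ i a) i (C.sigma a i v) = v := by
  funext k
  simp only [sigma, C.c_rho]
  by_cases hk : k = i
  · simp only [hk, if_pos rfl]
    have hterm : ∀ j, C.c a i j * (v j - if j = i then ∑ j', C.c a i j' * v j' else 0)
        = C.c a i j * v j - (if j = i then C.c a i j * ∑ j', C.c a i j' * v j' else 0) := by
      intro j; by_cases hj : j = i <;> simp [hj, mul_sub]
    rw [Finset.sum_congr rfl fun j _ => hterm j, Finset.sum_sub_distrib,
      Finset.sum_ite_eq' Finset.univ i fun j => C.c a i j * ∑ j', C.c a i j' * v j']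
    simp only [Finset.mem_univ, if_pos, C.c_diag a i]
    ring
  · simp [hk]

lemma sigma_injective (a : A) (i : I) : Function.Injective (C.sigma a i) :=
  Function.LeftInverse.injective (g := C.sigma (C.ρ i a) i) (fun v => sigma_sigma a i v)

lemma wordMap_injective (a : A) (l : List I) : Function.Injective (C.wordMap a l) := by
  induction l with
  | nil => exact fun x y h => h
  | cons i l ih =>
      exact Function.Injective.comp (sigma_injective _ i) ih

lemma mor_toFun_injective (u : Mor C) : Function.Injective u.toFun := by
  obtain ⟨l, _, h⟩ := u.spec
  exact h ▸ wordMap_injective u.src l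

lemma comp_src (u x : Mor C) (h : x.tgt = u.src) : (u.comp x).src = x.src := by
  simp [Mor.comp, h]

lemma comp_tgt (u x : Mor C) (h : x.tgt = u.src) : (u.comp x).tgt = u.tgt := by
  simp [Mor.comp, h]

lemma comp_toFun (u x : Mor C) (h : x.tgt = u.src) :
    (u.comp x).toFun = u.toFun ∘ x.toFun := by
  simp [Mor.comp, h]

lemma comp_left_cancel (u x y : Mor C) (hx : x.tgt = u.src) (hy : y.tgt = u.src)
    (h : u.comp x = u.comp y) : x = y := by
  have hs : x.src = y.src := by
    have := congrArg Mor.src h; rwa [comp_src u x hx, comp_src u y hy] at this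
  have hf : x.toFun = y.toFun := by
    have := congrArg Mor.toFun h
    rw [comp_toFun u x hx, comp_toFun u y hy] at this
    funext t
    exact mor_toFun_injective u (congrFun this t)
  exact Mor.ext hs (hx.trans hy.symm) hf

lemma comp_assoc (u x y : Mor C) (h1 : x.tgt = u.src) (h2 : y.tgt = x.src) :
    (u.comp x).comp y = u.comp (x.comp y) := by
  have h3 : y.tgt = (u.comp x).src := by rw [comp_src u x h1]; exact h2
  have h4 : (x.comp y).tgt = u.src := by rw [comp_tgt x y h2]; exact h1
  refine Mor.ext ?_ ?_ ?_
  · rw [comp_src _ y h3, comp_src u _ h4, comp_src x y h2]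
  · rw [comp_tgt _ y h3, comp_tgt u x h1, comp_tgt u _ h4]
  · rw [comp_toFun _ y h3, comp_toFun u x h1, comp_toFun u _ h4, comp_toFun x y h2,
      Function.comp_assoc]

lemma len_le_of_realizes {w : Mor C} {l : List I} (h : Realizes w l) :
    len w ≤ l.length := Nat.sInf_le ⟨l, h, rfl⟩

lemma exists_isReduced (w : Mor C) : ∃ l : List I, Realizes w l ∧ l.length = len w := by
  have hne : {k | ∃ l : List I, Realizes w l ∧ l.length = k}.Nonempty := by
    obtain ⟨l, h1, h2⟩ := w.spec
    exact ⟨l.length, l, ⟨h1, h2⟩, rfl⟩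
  exact Nat.sInf_mem hne

lemma realizes_comp {x y : Mor C} {lx ly : List I} (h : y.tgt = x.src)
    (hx : Realizes x lx) (hy : Realizes y ly) : Realizes (x.comp y) (lx ++ ly) := by
  constructor
  · rw [comp_src x y h, C.wordTarget_append, hy.1, h, hx.1, comp_tgt x y h]
  · rw [comp_src x y h, C.wordMap_append, hy.1, h, hx.2, hy.2, comp_toFun x y h]

lemma len_comp_le (x y : Mor C) (h : y.tgt = x.src) :
    len (x.comp y) ≤ len x + len y := by
  obtain ⟨lx, hlx, hlx2⟩ := exists_isReduced x
  obtain ⟨ly, hly, hly2⟩ := exists_isReduced y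
  have := len_le_of_realizes (realizes_comp h hlx hly)
  simpa [hlx2, hly2] using this

lemma len_idMor (a : A) : len (idMor C a) = 0 :=
  Nat.le_zero.mp (len_le_of_realizes (w := idMor C a) (l := []) ⟨rfl, rfl⟩)

lemma idMor_comp (a : A) (x : Mor C) (h : x.tgt = a) : (idMor C a).comp x = x := by
  have h' : x.tgt = (idMor C a).src := h
  refine Mor.ext (comp_src _ x h') ((comp_tgt _ x h').trans h.symm) ?_
  rw [comp_toFun _ x h']
  rfl

lemma key_len {u z x w : Mor C} (hz : z.tgt = u.src)
    (hlen : len (u.comp z) = len u + len z)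
    (hw : w.tgt = x.src) (hzw : z = x.comp w) (hlz : len z = len x + len w) :
    len (u.comp x) = len u + len x := by
  have hx : x.tgt = u.src := by rw [hzw, comp_tgt x w hw] at hz; exact hz
  have hassoc : u.comp z = (u.comp x).comp w := by
    rw [hzw, comp_assoc u x w hx hw]
  have h1 : len (u.comp z) ≤ len (u.comp x) + len w := by
    rw [hassoc]
    exact len_comp_le _ w (by rw [comp_src u x hx]; exact hw)
  have h2 : len (u.comp x) ≤ len u + len x := len_comp_le u x hx
  omega

end Aux

/-- For `u ≤_R v` the map `w ↦ u⁻¹w` is a poset isomorphism from the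
interval `[u,v]` onto `[id^b, u⁻¹v]`; equivalently its inverse `x ↦ ux` is a poset
isomorphism `[id^b, u⁻¹v] → [u,v]` (here `z = u⁻¹v` is characterized by `uz = v`). -/
theorem interval_iso (C : CartanScheme I A) (hC : C.IsFRS) (a : A)
    (u v z : Mor C) (hu : u.tgt = a) (huv : weakLe u v)
    (hz : z.tgt = u.src) (hzv : u.comp z = v) :
    Set.BijOn (fun x : Mor C => u.comp x)
      {x : Mor C | weakLe (idMor C u.src) x ∧ weakLe x z}
      {x : Mor C | weakLe u x ∧ weakLe x v} ∧
    (∀ x y : Mor C,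
      (weakLe (idMor C u.src) x ∧ weakLe x z) → (weakLe (idMor C u.src) y ∧ weakLe y z) →
      (weakLe x y ↔ weakLe (u.comp x) (u.comp y))) := by
  obtain ⟨t, ht1, ht2, ht3⟩ := huv
  have hteq : t = z := comp_left_cancel u t z ht1 hz (ht2.symm.trans hzv.symm)
  have hlen : len v = len u + len z := hteq ▸ ht3
  have hulen : len (u.comp z) = len u + len z := by rw [hzv]; exact hlen
  have main : ∀ x : Mor C, weakLe x z → x.tgt = u.src ∧ len (u.comp x) = len u + len x := by
    rintro x ⟨w, hw1, hw2, hw3⟩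
    have hx : x.tgt = u.src := by
      have := hz; rw [hw2, comp_tgt x w hw1] at this; exact this
    exact ⟨hx, key_len hz hulen hw1 hw2 hw3⟩
  refine ⟨⟨?_, ?_, ?_⟩, ?_⟩
  · -- MapsTo
    rintro x ⟨hx1, hx2⟩
    obtain ⟨hxt, hxlen⟩ := main x hx2
    obtain ⟨w, hw1, hw2, hw3⟩ := hx2
    constructor
    · exact ⟨x, hxt, rfl, hxlen⟩
    · refine ⟨w, ?_, ?_, ?_⟩
      · rw [comp_src u x hxt]; exact hw1
      · show v = (u.comp x).comp w
        rw [← hzv, hw2, comp_assoc u x w hxt hw1]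
      · rw [hxlen]; omega
  · -- InjOn
    rintro x ⟨hx1, hx2⟩ y ⟨hy1, hy2⟩ h
    exact comp_left_cancel u x y (main x hx2).1 (main y hy2).1 h
  · -- SurjOn
    rintro y ⟨hy1, hy2⟩
    obtain ⟨x, hx1, hx2, hx3⟩ := hy1
    obtain ⟨w, hw1, hw2, hw3⟩ := hy2
    have hwt : w.tgt = x.src := by rw [hx2, comp_src u x hx1] at hw1; exact hw1
    have hv2 : v = u.comp (x.comp w) := by rw [hw2, hx2, comp_assoc u x w hx1 hwt]
    have hxwz : x.comp w = z :=
      comp_left_cancel u _ z (by rw [comp_tgt x w hwt]; exact hx1) hz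
        (hv2.symm.trans hzv.symm)
    have hlz : len z = len x + len w := by omega
    refine ⟨x, ⟨⟨x, hx1, (idMor_comp u.src x hx1).symm, ?_⟩,
      ⟨w, hwt, hxwz.symm, hlz⟩⟩, hx2.symm⟩
    rw [len_idMor]; omega
  · -- order isomorphism
    rintro x y ⟨hx1, hx2⟩ ⟨hy1, hy2⟩
    obtain ⟨hxt, hxlen⟩ := main x hx2
    obtain ⟨hyt, hylen⟩ := main y hy2
    constructor
    · rintro ⟨s, hs1, hs2, hs3⟩
      refine ⟨s, ?_, ?_, ?_⟩
      · rw [comp_src u x hxt]; exact hs1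
      · rw [hs2, comp_assoc u x s hxt hs1]
      · rw [hxlen, hylen]; omega
    · rintro ⟨s, hs1, hs2, hs3⟩
      have hs1' : s.tgt = x.src := by rw [comp_src u x hxt] at hs1; exact hs1
      have hcomp : u.comp y = u.comp (x.comp s) := by
        rw [hs2, comp_assoc u x s hxt hs1']
      have hyx : y = x.comp s :=
        comp_left_cancel u y _ hyt (by rw [comp_tgt x s hs1']; exact hxt) hcomp
      refine ⟨s, hs1', hyx, ?_⟩
      rw [hxlen, hylen] at hs3
      omega
end
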